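/- arXiv:2312.02166 — 5 statements merged into one kernel-verified Lean document; each statement's English description precedes it below -/
import Mathlib

section
/- Fix n ≥ 1, positive reals β₀, …, β_{n−1}, ρ > 0, μ₀ > 0, R₀ > 0. Suppose Φ, Ψ : ℝ → ℝ are continuous on [0,∞) and differentiable on (0,∞), with Φ(x) ≥ 0 on [0,∞), Φ′(x) < 0 on (0,∞), Φ(0) = 1, Φ(x) → 0 as x → ∞, Ψ(x) ≥ 0 on [0,∞), Ψ′(x) > 0 on (0,∞), Ψ(0) = 0, Ψ(x) → ∞ as x → ∞, and that the normalization condition Σ_{i=0}^{n−1} β_i · i! / (ρ + μ₀)^{i+1} = 1 holds. Then there exists a unique P* > 0 with R(P*) = 1 if and only if R₀ > 1, where R(x) = R₀ Φ(x) Σ_{i=0}^{n−1} β_i · i! / (ρ + μ₀ + Ψ(x))^{i+1}. -/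
open Real Set Finset Filter

/-! The reproduction number `R` is strictly decreasing on `[0, ∞)`: `Φ` is nonnegative and
decreasing, and every term of the sum decreases because `Ψ` increases. The normalization gives
`R 0 = R₀`, and `R ≤ R₀ Φ → 0`. So by the intermediate value theorem `R` attains the value `1` on
`(0, ∞)` iff `R₀ > 1`, and strict monotonicity makes the root unique. -/

lemma strictAntiOn_Ici_of_deriv_neg {f : ℝ → ℝ} {a : ℝ} (hf : ContinuousOn f (Ici a))
    (hf' : ∀ x ∈ Ioi a, deriv f x < 0) : StrictAntiOn f (Ici a) :=
  strictAntiOn_of_deriv_neg (convex_Ici a) hf (by rwa [interior_Ici])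

lemma strictMonoOn_Ici_of_deriv_pos {f : ℝ → ℝ} {a : ℝ} (hf : ContinuousOn f (Ici a))
    (hf' : ∀ x ∈ Ioi a, 0 < deriv f x) : StrictMonoOn f (Ici a) :=
  strictMonoOn_of_deriv_pos (convex_Ici a) hf (by rwa [interior_Ici])

lemma strictAntiOn_sum_div_pow {s : Finset ℕ} {a : ℕ → ℝ} (hs : s.Nonempty)
    (ha : ∀ i ∈ s, 0 < a i) :
    StrictAntiOn (fun c : ℝ => ∑ i ∈ s, a i / c ^ (i + 1)) (Ioi 0) :=
  fun _ hb _ _ hbc => Finset.sum_lt_sum_of_nonempty hs fun i hi =>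
    div_lt_div_of_pos_left (ha i hi) (pow_pos hb _) (pow_lt_pow_left₀ hbc hb.le i.succ_ne_zero)

lemma StrictAntiOn.mul_of_nonneg_of_pos {α : Type*} [Preorder α] {f g : α → ℝ} {s : Set α}
    (hf : StrictAntiOn f s) (hg : StrictAntiOn g s) (hf₀ : ∀ x ∈ s, 0 ≤ f x)
    (hg₀ : ∀ x ∈ s, 0 < g x) :
    StrictAntiOn (fun x => f x * g x) s := fun a ha b hb hab =>
  calc f b * g b ≤ f b * g a := mul_le_mul_of_nonneg_left (hg ha hb hab).le (hf₀ b hb)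
    _ < f a * g a := mul_lt_mul_of_pos_right (hf ha hb hab) (hg₀ a ha)

theorem existsUnique_pos_eq_iff_lt_of_strictAntiOn {f : ℝ → ℝ} {y : ℝ}
    (hcont : ContinuousOn f (Ici 0)) (hanti : StrictAntiOn f (Ici 0))
    (hy : ∀ᶠ x in atTop, f x < y) :
    (∃! P, 0 < P ∧ f P = y) ↔ y < f 0 := by
  constructor
  · rintro ⟨P, ⟨hP, rfl⟩, -⟩
    exact hanti self_mem_Ici hP.le hP
  · intro hy₀
    obtain ⟨M, hMy, hM⟩ := (hy.and (eventually_ge_atTop 0)).exists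
    obtain ⟨P, hPM, rfl⟩ :=
      intermediate_value_Ioo' hM (hcont.mono Icc_subset_Ici_self) ⟨hMy, hy₀⟩
    exact ⟨P, ⟨hPM.1, rfl⟩, fun Q ⟨hQ, hQP⟩ => hanti.injOn hQ.le hPM.1.le hQP⟩

theorem stmt_5_general (n : ℕ) (hn : 1 ≤ n) (β : ℕ → ℝ) (hβ : ∀ i < n, 0 < β i)
    (ρ μ₀ R₀ : ℝ) (hρ : 0 < ρ) (hμ₀ : 0 < μ₀) (hR₀ : 0 < R₀)
    (Φ Ψ : ℝ → ℝ)
    (hΦc : ContinuousOn Φ (Set.Ici 0))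
    (hΦpos : ∀ x ∈ Set.Ici (0 : ℝ), 0 ≤ Φ x) (hΦ' : ∀ x ∈ Set.Ioi (0 : ℝ), deriv Φ x < 0)
    (hΦ0 : Φ 0 = 1) (hΦlim : Tendsto Φ atTop (nhds 0))
    (hΨc : ContinuousOn Ψ (Set.Ici 0))
    (hΨpos : ∀ x ∈ Set.Ici (0 : ℝ), 0 ≤ Ψ x) (hΨ' : ∀ x ∈ Set.Ioi (0 : ℝ), 0 < deriv Ψ x)
    (hΨ0 : Ψ 0 = 0)
    (hnorm : ∑ i ∈ Finset.range n, β i * (Nat.factorial i) / (ρ + μ₀) ^ (i + 1) = 1) :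
    (∃! P : ℝ, 0 < P ∧
        R₀ * Φ P * ∑ i ∈ Finset.range n, β i * (Nat.factorial i) / (ρ + μ₀ + Ψ P) ^ (i + 1)
          = 1)
      ↔ 1 < R₀ := by
  set S : ℝ → ℝ := fun x => ∑ i ∈ range n, β i * (Nat.factorial i) / (ρ + μ₀ + Ψ x) ^ (i + 1)
  have hden : ∀ x ∈ Ici (0 : ℝ), 0 < ρ + μ₀ + Ψ x := fun x hx => by linarith [hΨpos x hx]
  have hcoef : ∀ i ∈ range n, 0 < β i * (Nat.factorial i) := fun i hi => by
    have := hβ i (mem_range.1 hi); positivity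
  have hR₀Φ_anti : StrictAntiOn (fun x => R₀ * Φ x) (Ici 0) := fun a ha b hb hab =>
    mul_lt_mul_of_pos_left (strictAntiOn_Ici_of_deriv_neg hΦc hΦ' ha hb hab) hR₀
  have hS_anti : StrictAntiOn S (Ici 0) :=
    (strictAntiOn_sum_div_pow ⟨0, mem_range.2 hn⟩ hcoef).comp_strictMonoOn
      ((strictMonoOn_Ici_of_deriv_pos hΨc hΨ').const_add (ρ + μ₀)) hden
  have hS_pos : ∀ x ∈ Ici (0 : ℝ), 0 < S x := fun x hx =>
    sum_pos (fun i hi => div_pos (hcoef i hi) (pow_pos (hden x hx) _)) ⟨0, mem_range.2 hn⟩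
  have hS₀ : S 0 = 1 := by simp only [S, hΨ0, add_zero, hnorm]
  have hS_cont : ContinuousOn S (Ici 0) := continuousOn_finsetSum _ fun i _ =>
    continuousOn_const.div ((continuousOn_const.add hΨc).pow _)
      fun x hx => (pow_pos (hden x hx) _).ne'
  have hsmall : ∀ᶠ x in atTop, R₀ * Φ x * S x < 1 := by
    have hlim : Tendsto (fun x => R₀ * Φ x) atTop (nhds 0) := by
      simpa using hΦlim.const_mul R₀
    filter_upwards [hlim.eventually_lt_const one_pos, eventually_ge_atTop 0] with x hx hx₀
    have hS_le : S x ≤ 1 := hS₀ ▸ hS_anti.antitoneOn self_mem_Ici hx₀ hx₀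
    nlinarith [mul_nonneg hR₀.le (hΦpos x hx₀)]
  simpa [hΦ0, hS₀] using existsUnique_pos_eq_iff_lt_of_strictAntiOn
    ((continuousOn_const.mul hΦc).mul hS_cont)
    (hR₀Φ_anti.mul_of_nonneg_of_pos hS_anti (fun x hx => mul_nonneg hR₀.le (hΦpos x hx)) hS_pos)
    hsmall

/-- Under the full set of assumptions (A1)-(A2) and the normalization
condition, there exists a unique non-trivial steady state `P* > 0` with `R(P*) = 1`
if and only if `R₀ > 1`. -/
theorem stmt_5 (n : ℕ) (hn : 1 ≤ n) (β : ℕ → ℝ) (hβ : ∀ i < n, 0 < β i)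
    (ρ μ₀ R₀ : ℝ) (hρ : 0 < ρ) (hμ₀ : 0 < μ₀) (hR₀ : 0 < R₀)
    (Φ Ψ : ℝ → ℝ)
    (hΦc : ContinuousOn Φ (Set.Ici 0)) (hΦd : DifferentiableOn ℝ Φ (Set.Ioi 0))
    (hΦpos : ∀ x ∈ Set.Ici (0 : ℝ), 0 ≤ Φ x) (hΦ' : ∀ x ∈ Set.Ioi (0 : ℝ), deriv Φ x < 0)
    (hΦ0 : Φ 0 = 1) (hΦlim : Tendsto Φ atTop (nhds 0))
    (hΨc : ContinuousOn Ψ (Set.Ici 0)) (hΨd : DifferentiableOn ℝ Ψ (Set.Ioi 0))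
    (hΨpos : ∀ x ∈ Set.Ici (0 : ℝ), 0 ≤ Ψ x) (hΨ' : ∀ x ∈ Set.Ioi (0 : ℝ), 0 < deriv Ψ x)
    (hΨ0 : Ψ 0 = 0) (hΨlim : Tendsto Ψ atTop atTop)
    (hnorm : ∑ i ∈ Finset.range n, β i * (Nat.factorial i) / (ρ + μ₀) ^ (i + 1) = 1) :
    (∃! P : ℝ, 0 < P ∧
        R₀ * Φ P * ∑ i ∈ Finset.range n, β i * (Nat.factorial i) / (ρ + μ₀ + Ψ P) ^ (i + 1)
          = 1)
      ↔ 1 < R₀ :=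
  stmt_5_general n hn β hβ ρ μ₀ R₀ hρ hμ₀ hR₀ Φ Ψ hΦc hΦpos hΦ' hΦ0 hΦlim hΨc hΨpos hΨ' hΨ0 hnorm
end

section
/- Fix n ≥ 1, positive reals β₀, …, β_{n−1}, ρ > 0, μ₀ > 0, R₀ > 0, and Φ, Ψ : ℝ → ℝ. Let P* > 0 satisfy Φ(P*) > 0, Ψ(P*) ≥ 0 and R(P*) = 1, where R(x) = R₀ Φ(x) Σ_{i=0}^{n−1} β_i · i! / (ρ + μ₀ + Ψ(x))^{i+1}. Set D = ρ + μ₀ + Ψ(P*), P₁* = ((μ₀ + Ψ(P*)) / D) · P*, and P_{i+1}* = (i! / D^i) · P₁* for i = 1, …, n−1. Then: (i) −(μ₀ + Ψ(P*)) P* + R₀ Φ(P*) Σ_{i=0}^{n−1} β_i P_{i+1}* = 0; (ii) (R₀ β₀ Φ(P*) − D) P₁* + R₀ Φ(P*) Σ_{i=1}^{n−1} β_i P_{i+1}* = 0; (iii) i · P_i* = D · P_{i+1}* for every i = 1, …, n−1. -/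
open Real Finset

/-- If `P* > 0` satisfies `R(P*) = 1` and the moments `P₁*, …, P_n*` are
defined by `P₁* = ((μ₀ + Ψ(P*))/D) P*` and `P_{i+1}* = (i!/D^i) P₁*` for `i = 1, …, n−1`,
where `D = ρ + μ₀ + Ψ(P*)`, then the stationary system of the moment ODEs holds. -/
theorem stmt_7 (n : ℕ) (hn : 1 ≤ n) (β : ℕ → ℝ) (hβ : ∀ i < n, 0 < β i)
    (ρ μ₀ R₀ : ℝ) (hρ : 0 < ρ) (hμ₀ : 0 < μ₀) (hR₀ : 0 < R₀)
    (Φ Ψ : ℝ → ℝ) (Pstar : ℝ) (hP : 0 < Pstar) (hΦP : 0 < Φ Pstar) (hΨP : 0 ≤ Ψ Pstar)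
    (hRP : R₀ * Φ Pstar *
      ∑ i ∈ Finset.range n, β i * (Nat.factorial i) / (ρ + μ₀ + Ψ Pstar) ^ (i + 1) = 1)
    (D : ℝ) (hD : D = ρ + μ₀ + Ψ Pstar)
    (Pm : ℕ → ℝ) (hPm1 : Pm 1 = ((μ₀ + Ψ Pstar) / D) * Pstar)
    (hPmi : ∀ i : ℕ, 1 ≤ i → i ≤ n - 1 →
      Pm (i + 1) = ((Nat.factorial i : ℝ) / D ^ i) * Pm 1) :
    -(μ₀ + Ψ Pstar) * Pstar
        + R₀ * Φ Pstar * ∑ i ∈ Finset.range n, β i * Pm (i + 1) = 0 ∧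
    (R₀ * β 0 * Φ Pstar - D) * Pm 1
        + R₀ * Φ Pstar * ∑ i ∈ Finset.Ico 1 n, β i * Pm (i + 1) = 0 ∧
    ∀ i : ℕ, 1 ≤ i → i ≤ n - 1 → (i : ℝ) * Pm i = D * Pm (i + 1) := by

  have hD0 : 0 < D := by rw [hD]; linarith
  have hDne : D ≠ 0 := ne_of_gt hD0
  have key : ∀ i ∈ Finset.range n, Pm (i + 1) = ((Nat.factorial i : ℝ) / D ^ i) * Pm 1 := by
    intro i hi
    rcases Nat.eq_zero_or_pos i with h | h
    · subst h; simp
    · exact hPmi i h (by simp at hi; omega)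
  have hsum : ∑ i ∈ Finset.range n, β i * Pm (i + 1)
      = (∑ i ∈ Finset.range n, β i * (Nat.factorial i : ℝ) / D ^ i) * Pm 1 := by
    rw [Finset.sum_mul]
    refine Finset.sum_congr rfl fun i hi => ?_
    rw [key i hi]; ring
  have hS : R₀ * Φ Pstar * (∑ i ∈ Finset.range n, β i * (Nat.factorial i : ℝ) / D ^ i) = D := by
    have h1 : ∑ i ∈ Finset.range n, β i * (Nat.factorial i : ℝ) / D ^ (i + 1)
        = (∑ i ∈ Finset.range n, β i * (Nat.factorial i : ℝ) / D ^ i) / D := by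
      rw [Finset.sum_div]
      refine Finset.sum_congr rfl fun i _ => ?_
      rw [pow_succ, ← div_div]
    have hRP' : R₀ * Φ Pstar *
        ((∑ i ∈ Finset.range n, β i * (Nat.factorial i : ℝ) / D ^ i) / D) = 1 := by
      rw [← h1, hD]; exact hRP
    field_simp at hRP'
    linarith
  have hPm1' : D * Pm 1 = (μ₀ + Ψ Pstar) * Pstar := by
    rw [hPm1]; field_simp
  have htot : R₀ * Φ Pstar * ∑ i ∈ Finset.range n, β i * Pm (i + 1) = D * Pm 1 := by
    rw [hsum]; linear_combination Pm 1 * hS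
  refine ⟨by linear_combination htot + hPm1', ?_, ?_⟩
  · rw [Finset.range_eq_Ico, Finset.sum_eq_sum_Ico_succ_bot (by omega : 0 < n)] at htot
    simp only [Nat.zero_add] at htot
    linear_combination htot
  · intro i h1 h2
    obtain ⟨j, rfl⟩ : ∃ j, i = j + 1 := ⟨i - 1, by omega⟩
    rw [hPmi (j + 1) (by omega) h2]
    rcases Nat.eq_zero_or_pos j with hj | hj
    · subst hj; simp [Nat.factorial]; field_simp
    · rw [hPmi j hj (by omega)]
      rw [Nat.factorial_succ]
      push_cast
      field_simp
      ring
end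

section
/- Fix n ≥ 1, positive reals β₀, …, β_{n−1}, ρ > 0, μ₀ > 0, R₀ > 0, and Φ, Ψ : ℝ → ℝ. Suppose (P*, P₁*, …, P_n*) are real numbers with P* > 0, P₁* > 0, Φ(P*) > 0, Ψ(P*) ≥ 0, satisfying the stationary system: 0 = −(μ₀ + Ψ(P*)) P* + R₀ Φ(P*) Σ_{i=0}^{n−1} β_i P_{i+1}*; 0 = (R₀ β₀ Φ(P*) − D) P₁* + R₀ Φ(P*) Σ_{i=1}^{n−1} β_i P_{i+1}*; and i P_i* = D P_{i+1}* for i = 1, …, n−1, where D = ρ + μ₀ + Ψ(P*). Then R(P*) = 1, P_{i+1}* = (i! / D^i) · P₁* for i = 1, …, n−1, and P₁* = ((μ₀ + Ψ(P*)) / D) · P*, where R(x) = R₀ Φ(x) Σ_{i=0}^{n−1} β_i · i! / (ρ + μ₀ + Ψ(x))^{i+1}. -/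
open Real Finset

/-- Conversely, if `(P*, P₁*, …, P_n*)` with `P* > 0`, `P₁* > 0` solves the
stationary moment system, then `R(P*) = 1`, `P_{i+1}* = (i!/D^i) P₁*` for `i = 1, …, n−1`,
and `P₁* = ((μ₀ + Ψ(P*))/D) P*`, where `D = ρ + μ₀ + Ψ(P*)`. -/
theorem stmt_8 (n : ℕ) (hn : 1 ≤ n) (β : ℕ → ℝ) (hβ : ∀ i < n, 0 < β i)
    (ρ μ₀ R₀ : ℝ) (hρ : 0 < ρ) (hμ₀ : 0 < μ₀) (hR₀ : 0 < R₀)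
    (Φ Ψ : ℝ → ℝ) (Pstar : ℝ) (Pm : ℕ → ℝ)
    (hP : 0 < Pstar) (hP1 : 0 < Pm 1) (hΦP : 0 < Φ Pstar) (hΨP : 0 ≤ Ψ Pstar)
    (D : ℝ) (hD : D = ρ + μ₀ + Ψ Pstar)
    (heq1 : -(μ₀ + Ψ Pstar) * Pstar
        + R₀ * Φ Pstar * ∑ i ∈ Finset.range n, β i * Pm (i + 1) = 0)
    (heq2 : (R₀ * β 0 * Φ Pstar - D) * Pm 1
        + R₀ * Φ Pstar * ∑ i ∈ Finset.Ico 1 n, β i * Pm (i + 1) = 0)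
    (heq3 : ∀ i : ℕ, 1 ≤ i → i ≤ n - 1 → (i : ℝ) * Pm i = D * Pm (i + 1)) :
    R₀ * Φ Pstar *
        ∑ i ∈ Finset.range n, β i * (Nat.factorial i) / (ρ + μ₀ + Ψ Pstar) ^ (i + 1) = 1 ∧
    (∀ i : ℕ, 1 ≤ i → i ≤ n - 1 →
        Pm (i + 1) = ((Nat.factorial i : ℝ) / D ^ i) * Pm 1) ∧
    Pm 1 = ((μ₀ + Ψ Pstar) / D) * Pstar := by
  have hDpos : 0 < D := by rw [hD]; linarith
  have hDne : D ≠ 0 := ne_of_gt hDpos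
  have key : ∀ i : ℕ, i ≤ n - 1 → Pm (i + 1) = ((Nat.factorial i : ℝ) / D ^ i) * Pm 1 := by
    intro i
    induction i with
    | zero => intro _; simp
    | succ k ih =>
      intro hk
      have hk' : k ≤ n - 1 := Nat.le_of_succ_le hk
      have h3 := heq3 (k + 1) (Nat.le_add_left 1 k) hk
      have hPk : Pm (k + 1) = ((Nat.factorial k : ℝ) / D ^ k) * Pm 1 := ih hk'
      have hstep : Pm (k + 1 + 1) = ((k : ℝ) + 1) / D * Pm (k + 1) := by
        push_cast at h3
        field_simp
        linarith
      rw [hstep, hPk, Nat.factorial_succ]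
      push_cast
      field_simp
      ring
  set S : ℝ := ∑ i ∈ Finset.range n, β i * (Nat.factorial i : ℝ) / D ^ i with hS
  have hsum : ∑ i ∈ Finset.range n, β i * Pm (i + 1) = S * Pm 1 := by
    rw [hS, Finset.sum_mul]
    apply Finset.sum_congr rfl
    intro i hi
    rw [Finset.mem_range] at hi
    rw [key i (Nat.le_sub_one_of_lt hi)]
    ring
  have hsum2 : ∑ i ∈ Finset.Ico 1 n, β i * Pm (i + 1)
      = (∑ i ∈ Finset.Ico 1 n, β i * (Nat.factorial i : ℝ) / D ^ i) * Pm 1 := by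
    rw [Finset.sum_mul]
    apply Finset.sum_congr rfl
    intro i hi
    rw [Finset.mem_Ico] at hi
    rw [key i (Nat.le_sub_one_of_lt hi.2)]
    ring
  have hsplit : S = β 0 + ∑ i ∈ Finset.Ico 1 n, β i * (Nat.factorial i : ℝ) / D ^ i := by
    rw [hS, Finset.range_eq_Ico, Finset.sum_eq_sum_Ico_succ_bot hn]
    simp
  have hRS : R₀ * Φ Pstar * S = D := by
    rw [hsum2] at heq2
    have h2 : (R₀ * Φ Pstar * S - D) * Pm 1 = 0 := by
      rw [hsplit]; ring_nf; ring_nf at heq2; linarith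
    rcases mul_eq_zero.mp h2 with h | h
    · linarith
    · exact absurd h (ne_of_gt hP1)
  refine ⟨?_, fun i _ h2 => key i h2, ?_⟩
  · have hgoal : ∑ i ∈ Finset.range n, β i * (Nat.factorial i : ℝ) / (ρ + μ₀ + Ψ Pstar) ^ (i + 1)
        = S / D := by
      rw [hS, Finset.sum_div]
      apply Finset.sum_congr rfl
      intro i _
      rw [← hD, pow_succ]
      field_simp
    rw [hgoal, ← mul_div_assoc, hRS, div_self hDne]
  · rw [hsum, ← mul_assoc, hRS] at heq1
    field_simp
    linarith
end

section
/- Let ρ > 0, μ₀ > 0, Ψ : ℝ → ℝ, let i ≥ 1 be a natural number, and let p : ℝ × ℝ → ℝ, P : ℝ → ℝ, and P_i, P_{i+1} : ℝ → ℝ with P_j(t) = ∫₀^∞ a^{j−1} e^{−ρa} p(a,t) da for j = i, i+1. Fix t ∈ ℝ and assume: (i) for each a ≥ 0, ∂p/∂t(a,t) + ∂p/∂a(a,t) + (μ₀ + Ψ(P(t))) p(a,t) = 0; (ii) a ↦ p(a,t) is continuously differentiable on [0,∞) and the functions a ↦ a^i e^{−ρa} p(a,t), a ↦ a^{i−1}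 e^{−ρa} p(a,t), a ↦ a^i e^{−ρa} ∂p/∂a(a,t), and a ↦ a^i e^{−ρa} ∂p/∂t(a,t) are integrable on [0,∞); (iii) a^i e^{−ρa} p(a,t) → 0 as a → ∞; (iv) P_{i+1} is differentiable at t with P_{i+1}′(t) = ∫₀^∞ a^i e^{−ρa} ∂p/∂t(a,t) da. Then P_{i+1}′(t) = i P_i(t) − (ρ + μ₀ + Ψ(P(t))) P_{i+1}(t). -/
open Real Set MeasureTheory Filter

/-!
Integrating by parts against the weight `a ^ i * exp (-ρ * a)`, whose product with `p (·, t)`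
vanishes at `0` (because `i ≥ 1`) and at infinity, gives
`∫ a ^ i e^{-ρa} p_a = ρ P_{i+1} - i P_i`. The transport equation expresses
`∫ a ^ i e^{-ρa} p_t`, which is `P_{i+1}′(t)` by (iv), through this integral and `P_{i+1}`.
-/

theorem hasDerivAt_pow_mul_exp_neg_mul (i : ℕ) (ρ a : ℝ) :
    HasDerivAt (fun a : ℝ => a ^ i * exp (-ρ * a))
      (i * a ^ (i - 1) * exp (-ρ * a) - ρ * (a ^ i * exp (-ρ * a))) a := by
  have hexp : HasDerivAt (fun a : ℝ => exp (-ρ * a)) (exp (-ρ * a) * -ρ) a := by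
    simpa using ((hasDerivAt_id a).const_mul (-ρ)).exp
  exact ((hasDerivAt_pow i a).mul hexp).congr_deriv (by ring)

theorem integral_Ioi_pow_mul_exp_neg_mul_mul_deriv {i : ℕ} (hi : i ≠ 0) {ρ : ℝ} {f f' : ℝ → ℝ}
    (hf : ∀ a ∈ Ici (0 : ℝ), HasDerivAt f (f' a) a)
    (hint : IntegrableOn (fun a => a ^ i * exp (-ρ * a) * f a) (Ioi 0))
    (hint_pred : IntegrableOn (fun a => a ^ (i - 1) * exp (-ρ * a) * f a) (Ioi 0))
    (hint' : IntegrableOn (fun a => a ^ i * exp (-ρ * a) * f' a) (Ioi 0))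
    (hlim : Tendsto (fun a => a ^ i * exp (-ρ * a) * f a) atTop (nhds 0)) :
    ∫ a in Ioi 0, a ^ i * exp (-ρ * a) * f' a =
      ρ * (∫ a in Ioi 0, a ^ i * exp (-ρ * a) * f a)
        - i * ∫ a in Ioi 0, a ^ (i - 1) * exp (-ρ * a) * f a := by
  have hzero : Tendsto (fun a => a ^ i * exp (-ρ * a) * f a) (nhdsWithin 0 (Ioi 0)) (nhds 0) := by
    have hcont : ContinuousAt (fun a => a ^ i * exp (-ρ * a) * f a) 0 :=
      ((hasDerivAt_pow_mul_exp_neg_mul i ρ 0).mul (hf 0 self_mem_Ici)).continuousAt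
    simpa [zero_pow hi] using hcont.tendsto.mono_left nhdsWithin_le_nhds
  have hweight_deriv : ∀ a,
      (i * a ^ (i - 1) * exp (-ρ * a) - ρ * (a ^ i * exp (-ρ * a))) * f a =
        i * (a ^ (i - 1) * exp (-ρ * a) * f a) - ρ * (a ^ i * exp (-ρ * a) * f a) := by
    intro a; ring
  have hint_sub := (hint_pred.const_mul (i : ℝ)).sub (hint.const_mul ρ)
  have hparts := integral_Ioi_mul_deriv_eq_deriv_mul
    (fun a _ => hasDerivAt_pow_mul_exp_neg_mul i ρ a) (fun a ha => hf a (Ioi_subset_Ici_self ha))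
    hint' (IntegrableOn.congr_fun hint_sub (fun a _ => (hweight_deriv a).symm) measurableSet_Ioi)
    hzero hlim
  simp only [hweight_deriv] at hparts
  rw [hparts, integral_sub (hint_pred.const_mul _) (hint.const_mul _), integral_const_mul,
    integral_const_mul]
  ring

theorem stmt_14_general (ρ μ₀ : ℝ) (Ψ : ℝ → ℝ)
    (i : ℕ) (hi : 1 ≤ i)
    (p : ℝ → ℝ → ℝ) (P : ℝ → ℝ) (Pi Pi1 : ℝ → ℝ) (t : ℝ) (pt pa : ℝ → ℝ)
    -- the moments
    (hPi : ∀ s : ℝ, Pi s = ∫ a in Set.Ioi (0 : ℝ), a ^ (i - 1) * Real.exp (-ρ * a) * p a s)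
    (hPi1 : ∀ s : ℝ, Pi1 s = ∫ a in Set.Ioi (0 : ℝ), a ^ i * Real.exp (-ρ * a) * p a s)
    -- (i) the partial derivatives exist and the transport equation holds
    (hpa : ∀ a ∈ Set.Ici (0 : ℝ), HasDerivAt (fun b => p b t) (pa a) a)
    (hPDE : ∀ a ∈ Set.Ici (0 : ℝ), pt a + pa a + (μ₀ + Ψ (P t)) * p a t = 0)
    -- (ii) smoothness and integrability on [0,∞)
    (hint1 : IntegrableOn (fun a : ℝ => a ^ i * Real.exp (-ρ * a) * p a t) (Set.Ici 0))
    (hint2 : IntegrableOn (fun a : ℝ => a ^ (i - 1) * Real.exp (-ρ * a) * p a t) (Set.Ici 0))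
    (hint3 : IntegrableOn (fun a : ℝ => a ^ i * Real.exp (-ρ * a) * pa a) (Set.Ici 0))
    -- (iii) decay at infinity
    (hlim : Tendsto (fun a : ℝ => a ^ i * Real.exp (-ρ * a) * p a t) atTop (nhds 0))
    -- (iv) differentiation under the integral sign
    (hP' : HasDerivAt Pi1 (∫ a in Set.Ioi (0 : ℝ), a ^ i * Real.exp (-ρ * a) * pt a) t) :
    HasDerivAt Pi1 (i * Pi t - (ρ + μ₀ + Ψ (P t)) * Pi1 t) t := by
  set c := μ₀ + Ψ (P t)
  have hint1' := hint1.mono_set Ioi_subset_Ici_self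
  have hint3' := hint3.mono_set Ioi_subset_Ici_self
  have hparts := integral_Ioi_pow_mul_exp_neg_mul_mul_deriv (Nat.one_le_iff_ne_zero.mp hi) hpa
    hint1' (hint2.mono_set Ioi_subset_Ici_self) hint3' hlim
  have htransport : ∫ a in Ioi 0, a ^ i * exp (-ρ * a) * pt a =
      -((∫ a in Ioi 0, a ^ i * exp (-ρ * a) * pa a) + c * Pi1 t) := by
    have hpt : ∀ a ∈ Ioi (0 : ℝ), a ^ i * exp (-ρ * a) * pt a =
        -(a ^ i * exp (-ρ * a) * pa a + c * (a ^ i * exp (-ρ * a) * p a t)) := fun a ha => by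
      linear_combination (a ^ i * exp (-ρ * a)) * hPDE a (Ioi_subset_Ici_self ha)
    rw [setIntegral_congr_fun measurableSet_Ioi hpt, integral_neg,
      integral_add hint3' (hint1'.const_mul c), integral_const_mul, hPi1]
  rw [htransport, hparts, ← hPi, ← hPi1] at hP'
  convert hP' using 1
  ring

/-- If the age density `p` satisfies the transport equation
`p_t + p_a + (μ₀ + Ψ(P(t))) p = 0` at time `t`, with the stated integrability, decay and
smoothness hypotheses, and differentiation under the integral sign is valid for the
moment `P_{i+1}(t) = ∫₀^∞ a^i e^{−ρa} p(a,t) da` (`i ≥ 1`), then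
`P_{i+1}′(t) = i P_i(t) − (ρ + μ₀ + Ψ(P(t))) P_{i+1}(t)`. -/
theorem stmt_14 (ρ μ₀ : ℝ) (hρ : 0 < ρ) (hμ₀ : 0 < μ₀) (Ψ : ℝ → ℝ)
    (i : ℕ) (hi : 1 ≤ i)
    (p : ℝ → ℝ → ℝ) (P : ℝ → ℝ) (Pi Pi1 : ℝ → ℝ) (t : ℝ) (pt pa : ℝ → ℝ)
    -- the moments
    (hPi : ∀ s : ℝ, Pi s = ∫ a in Set.Ioi (0 : ℝ), a ^ (i - 1) * Real.exp (-ρ * a) * p a s)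
    (hPi1 : ∀ s : ℝ, Pi1 s = ∫ a in Set.Ioi (0 : ℝ), a ^ i * Real.exp (-ρ * a) * p a s)
    -- (i) the partial derivatives exist and the transport equation holds
    (hpt : ∀ a ∈ Set.Ici (0 : ℝ), HasDerivAt (fun s => p a s) (pt a) t)
    (hpa : ∀ a ∈ Set.Ici (0 : ℝ), HasDerivAt (fun b => p b t) (pa a) a)
    (hPDE : ∀ a ∈ Set.Ici (0 : ℝ), pt a + pa a + (μ₀ + Ψ (P t)) * p a t = 0)
    -- (ii) smoothness and integrability on [0,∞)
    (hc : ContinuousOn (fun a => p a t) (Set.Ici 0))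
    (hc' : ContinuousOn pa (Set.Ici 0))
    (hint1 : IntegrableOn (fun a : ℝ => a ^ i * Real.exp (-ρ * a) * p a t) (Set.Ici 0))
    (hint2 : IntegrableOn (fun a : ℝ => a ^ (i - 1) * Real.exp (-ρ * a) * p a t) (Set.Ici 0))
    (hint3 : IntegrableOn (fun a : ℝ => a ^ i * Real.exp (-ρ * a) * pa a) (Set.Ici 0))
    (hint4 : IntegrableOn (fun a : ℝ => a ^ i * Real.exp (-ρ * a) * pt a) (Set.Ici 0))
    -- (iii) decay at infinity
    (hlim : Tendsto (fun a : ℝ => a ^ i * Real.exp (-ρ * a) * p a t) atTop (nhds 0))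
    -- (iv) differentiation under the integral sign
    (hP' : HasDerivAt Pi1 (∫ a in Set.Ioi (0 : ℝ), a ^ i * Real.exp (-ρ * a) * pt a) t) :
    HasDerivAt Pi1 (i * Pi t - (ρ + μ₀ + Ψ (P t)) * Pi1 t) t :=
  stmt_14_general ρ μ₀ Ψ i hi p P Pi Pi1 t pt pa hPi hPi1 hpa hPDE hint1 hint2 hint3 hlim hP'
end

section
/- Let ρ > 0, μ₀ > 0, R₀ > 0, n ≥ 1, β₀, …, β_{n−1} > 0, Φ, Ψ : ℝ → ℝ, and let p : ℝ × ℝ → ℝ, P : ℝ → ℝ, and P_j(t) = ∫₀^∞ a^{j−1} e^{−ρa} p(a,t) da for j = 1, …, n. Fix t ∈ ℝ and assume: (i) for each a ≥ 0, ∂p/∂t(a,t) + ∂p/∂a(a,t) + (μ₀ + Ψ(P(t))) p(a,t) = 0; (ii) a ↦ p(a,t) is continuously differentiable on [0,∞) and a ↦ e^{−ρa} p(a,t), a ↦ e^{−ρa} ∂p/∂a(a,t), a ↦ e^{−ρa} ∂p/∂t(a,t) are integrable on [0,∞); (iii) e^{−ρa} p(a,t) → 0 as a → ∞; (iv) P₁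 is differentiable at t with P₁′(t) = ∫₀^∞ e^{−ρa} ∂p/∂t(a,t) da; (v) the renewal (birth) condition p(0,t) = R₀ Φ(P(t)) Σ_{i=0}^{n−1} β_i P_{i+1}(t) holds. Then P₁′(t) = (R₀ β₀ Φ(P(t)) − ρ − μ₀ − Ψ(P(t))) P₁(t) + R₀ Φ(P(t)) Σ_{i=1}^{n−1} β_i P_{i+1}(t). -/
open Real Set MeasureTheory Filter Finset

/-! Multiplying the transport equation by `e^{-ρa}` and integrating over `a > 0` turns `∂ₜp` into
`P₁'` and, after an integration by parts in `a`, turns `∂ₐp` into `ρ P₁ - p(0,t)`; the boundary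
value `p(0,t)` is then supplied by the renewal condition, whose `i = 0` term is proportional to
`P₁` itself. -/

theorem integral_exp_mul_deriv_Ioi {f f' : ℝ → ℝ} (ρ : ℝ)
    (hf : ∀ a ∈ Ici (0 : ℝ), HasDerivAt f (f' a) a)
    (hfint : IntegrableOn (fun a => exp (-ρ * a) * f a) (Ioi 0))
    (hf'int : IntegrableOn (fun a => exp (-ρ * a) * f' a) (Ioi 0))
    (hlim : Tendsto (fun a => exp (-ρ * a) * f a) atTop (nhds 0)) :
    ∫ a in Ioi 0, exp (-ρ * a) * f' a = ρ * (∫ a in Ioi 0, exp (-ρ * a) * f a) - f 0 := by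
  have hderiv : ∀ a ∈ Ici (0 : ℝ), HasDerivAt (fun a => exp (-ρ * a) * f a)
      (-ρ * (exp (-ρ * a) * f a) + exp (-ρ * a) * f' a) a := by
    intro a ha
    have hexp : HasDerivAt (fun a : ℝ => exp (-ρ * a)) (exp (-ρ * a) * -ρ) a := by
      simpa using ((hasDerivAt_id a).const_mul (-ρ)).exp
    exact (hexp.mul (hf a ha)).congr_deriv (by ring)
  have hFTC := integral_Ioi_of_hasDerivAt_of_tendsto' hderiv
    ((hfint.const_mul (-ρ)).add hf'int) hlim
  rw [integral_add (hfint.const_mul _) hf'int, integral_const_mul] at hFTC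
  simp only [mul_zero, exp_zero, one_mul] at hFTC
  linarith

theorem integral_exp_mul_timeDeriv_of_transport {u ut ua : ℝ → ℝ} (ρ c : ℝ)
    (hua : ∀ a ∈ Ici (0 : ℝ), HasDerivAt u (ua a) a)
    (htransport : ∀ a ∈ Ioi (0 : ℝ), ut a + ua a + c * u a = 0)
    (huint : IntegrableOn (fun a => exp (-ρ * a) * u a) (Ioi 0))
    (huaint : IntegrableOn (fun a => exp (-ρ * a) * ua a) (Ioi 0))
    (hlim : Tendsto (fun a => exp (-ρ * a) * u a) atTop (nhds 0)) :
    ∫ a in Ioi 0, exp (-ρ * a) * ut a = u 0 - (ρ + c) * ∫ a in Ioi 0, exp (-ρ * a) * u a := by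
  have hut : ∀ a ∈ Ioi (0 : ℝ),
      exp (-ρ * a) * ut a = -(exp (-ρ * a) * ua a) + -c * (exp (-ρ * a) * u a) := by
    intro a ha
    rw [show ut a = -ua a - c * u a by linarith [htransport a ha]]
    ring
  rw [setIntegral_congr_fun measurableSet_Ioi hut,
    integral_add (f := fun a => -(exp (-ρ * a) * ua a)) huaint.neg (huint.const_mul _),
    integral_neg, integral_const_mul, integral_exp_mul_deriv_Ioi ρ hua huint huaint hlim]
  ring

theorem stmt_15_general (ρ μ₀ R₀ : ℝ)
    (n : ℕ) (hn : 1 ≤ n) (β : ℕ → ℝ) (Φ Ψ : ℝ → ℝ)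
    (p : ℝ → ℝ → ℝ) (P : ℝ → ℝ) (Pm : ℕ → ℝ → ℝ) (t : ℝ) (pt pa : ℝ → ℝ)
    -- the moments P_j(t) = ∫₀^∞ a^(j−1) e^{−ρa} p(a,t) da for j = 1, …, n
    (hPm : ∀ j : ℕ, 1 ≤ j → j ≤ n → ∀ s : ℝ,
      Pm j s = ∫ a in Set.Ioi (0 : ℝ), a ^ (j - 1) * Real.exp (-ρ * a) * p a s)
    -- (i) the partial derivatives exist and the transport equation holds
    (hpa : ∀ a ∈ Set.Ici (0 : ℝ), HasDerivAt (fun b => p b t) (pa a) a)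
    (hPDE : ∀ a ∈ Set.Ici (0 : ℝ), pt a + pa a + (μ₀ + Ψ (P t)) * p a t = 0)
    -- (ii) smoothness and integrability on [0,∞)
    (hint1 : IntegrableOn (fun a : ℝ => Real.exp (-ρ * a) * p a t) (Set.Ici 0))
    (hint2 : IntegrableOn (fun a : ℝ => Real.exp (-ρ * a) * pa a) (Set.Ici 0))
    -- (iii) decay at infinity
    (hlim : Tendsto (fun a : ℝ => Real.exp (-ρ * a) * p a t) atTop (nhds 0))
    -- (iv) differentiation under the integral sign
    (hP1' : HasDerivAt (Pm 1) (∫ a in Set.Ioi (0 : ℝ), Real.exp (-ρ * a) * pt a) t)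
    -- (v) the renewal (birth) condition
    (hrenew : p 0 t = R₀ * Φ (P t) * ∑ i ∈ Finset.range n, β i * Pm (i + 1) t) :
    HasDerivAt (Pm 1)
      ((R₀ * β 0 * Φ (P t) - ρ - μ₀ - Ψ (P t)) * Pm 1 t
        + R₀ * Φ (P t) * ∑ i ∈ Finset.Ico 1 n, β i * Pm (i + 1) t) t := by
  have hP1 : Pm 1 t = ∫ a in Ioi 0, exp (-ρ * a) * p a t := by simpa using hPm 1 le_rfl hn t
  have hbirth : p 0 t = R₀ * Φ (P t) * (β 0 * Pm 1 t + ∑ i ∈ Ico 1 n, β i * Pm (i + 1) t) := by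
    rw [hrenew, range_eq_Ico, sum_eq_sum_Ico_succ_bot hn]
  convert hP1' using 1
  rw [integral_exp_mul_timeDeriv_of_transport ρ _ hpa (fun a ha => hPDE a ha.out.le)
    (hint1.mono_set Ioi_subset_Ici_self) (hint2.mono_set Ioi_subset_Ici_self) hlim, hbirth, ← hP1]
  ring

/-- If the age density `p` satisfies the transport equation
`p_t + p_a + (μ₀ + Ψ(P(t))) p = 0` at time `t` together with the renewal condition
`p(0,t) = R₀ Φ(P(t)) Σ_{i=0}^{n−1} β_i P_{i+1}(t)`, with the stated integrability, decay
and smoothness hypotheses, and differentiation under the integral sign is valid for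
`P₁(t) = ∫₀^∞ e^{−ρa} p(a,t) da`, then
`P₁′(t) = (R₀ β₀ Φ(P(t)) − ρ − μ₀ − Ψ(P(t))) P₁(t) + R₀ Φ(P(t)) Σ_{i=1}^{n−1} β_i P_{i+1}(t)`. -/
theorem stmt_15 (ρ μ₀ R₀ : ℝ) (hρ : 0 < ρ) (hμ₀ : 0 < μ₀) (hR₀ : 0 < R₀)
    (n : ℕ) (hn : 1 ≤ n) (β : ℕ → ℝ) (hβ : ∀ i < n, 0 < β i) (Φ Ψ : ℝ → ℝ)
    (p : ℝ → ℝ → ℝ) (P : ℝ → ℝ) (Pm : ℕ → ℝ → ℝ) (t : ℝ) (pt pa : ℝ → ℝ)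
    -- the moments P_j(t) = ∫₀^∞ a^(j−1) e^{−ρa} p(a,t) da for j = 1, …, n
    (hPm : ∀ j : ℕ, 1 ≤ j → j ≤ n → ∀ s : ℝ,
      Pm j s = ∫ a in Set.Ioi (0 : ℝ), a ^ (j - 1) * Real.exp (-ρ * a) * p a s)
    -- (i) the partial derivatives exist and the transport equation holds
    (hpt : ∀ a ∈ Set.Ici (0 : ℝ), HasDerivAt (fun s => p a s) (pt a) t)
    (hpa : ∀ a ∈ Set.Ici (0 : ℝ), HasDerivAt (fun b => p b t) (pa a) a)
    (hPDE : ∀ a ∈ Set.Ici (0 : ℝ), pt a + pa a + (μ₀ + Ψ (P t)) * p a t = 0)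
    -- (ii) smoothness and integrability on [0,∞)
    (hc : ContinuousOn (fun a => p a t) (Set.Ici 0))
    (hc' : ContinuousOn pa (Set.Ici 0))
    (hint1 : IntegrableOn (fun a : ℝ => Real.exp (-ρ * a) * p a t) (Set.Ici 0))
    (hint2 : IntegrableOn (fun a : ℝ => Real.exp (-ρ * a) * pa a) (Set.Ici 0))
    (hint3 : IntegrableOn (fun a : ℝ => Real.exp (-ρ * a) * pt a) (Set.Ici 0))
    -- (iii) decay at infinity
    (hlim : Tendsto (fun a : ℝ => Real.exp (-ρ * a) * p a t) atTop (nhds 0))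
    -- (iv) differentiation under the integral sign
    (hP1' : HasDerivAt (Pm 1) (∫ a in Set.Ioi (0 : ℝ), Real.exp (-ρ * a) * pt a) t)
    -- (v) the renewal (birth) condition
    (hrenew : p 0 t = R₀ * Φ (P t) * ∑ i ∈ Finset.range n, β i * Pm (i + 1) t) :
    HasDerivAt (Pm 1)
      ((R₀ * β 0 * Φ (P t) - ρ - μ₀ - Ψ (P t)) * Pm 1 t
        + R₀ * Φ (P t) * ∑ i ∈ Finset.Ico 1 n, β i * Pm (i + 1) t) t :=
  stmt_15_general ρ μ₀ R₀ n hn β Φ Ψ p P Pm t pt pa hPm hpa hPDE hint1 hint2 hlim hP1' hrenew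
end
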